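/- arXiv:2408.12278 — 2 statements merged into one kernel-verified Lean document; each statement's English description precedes it below -/
import Mathlib

section
/- Let K be a number field such that there exists a prime ideal 𝔓 of the ring of integers O_K lying above 2 with ramification index e(𝔓|2) = 1 and inertia degree f(𝔓|2) = 1. Let a, b ∈ O_K \ {0}, let r and d be positive integers with r odd and d ≥ 2, and set c = 2^d·b − 3^r. Then the Diophantine equation a·x^d − y² − z² + x·y·z − c = 0 has no solution (x₀, y₀, z₀) ∈ O_K³ with 2 ∣ x₀ in O_K. -/
/-!
Let `𝔓 ∣ 2` with `e(𝔓|2) = f(𝔓|2) = 1` and work modulo `𝔓²`. Since `x ∈ 𝔓`, `d ≥ 2` and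
`3 ^ r ≡ 3 (mod 4)` for odd `r`, the equation becomes `y² + z² - xyz ≡ 3 (mod 𝔓²)`.
As `𝒪_K/𝔓 = 𝔽₂`, each of `y, z` is `≡ 0` or `≡ 1 (mod 𝔓)`, and then its square is `≡ 0` or
`≡ 1 (mod 𝔓²)` because `2 ∈ 𝔓`. If `y ≡ z ≡ 1 (mod 𝔓)`, reducing mod `𝔓` gives `1 ≡ 0`.
Otherwise `xyz ∈ 𝔓²` and `y² + z² ≡ 0` or `1`, forcing `3 ∈ 𝔓²` or `2 ∈ 𝔓²`; the first
gives `1 = 3 - 2 ∈ 𝔓`, the second contradicts `e(𝔓|2) = 1`.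
-/

open NumberField

theorem four_dvd_three_pow_sub_three {R : Type*} [CommRing R] {r : ℕ} (hr : Odd r) :
    (4 : R) ∣ 3 ^ r - 3 := by
  obtain ⟨k, rfl⟩ := hr
  have e : (3 : R) ^ (2 * k + 1) - 3 = 3 * (9 ^ k - 1 ^ k) := by
    rw [pow_succ, pow_mul]; norm_num; ring
  rw [e]
  exact ((Dvd.intro 2 (by norm_num)).trans (sub_dvd_pow_sub_pow 9 1 k)).mul_left 3

namespace Ideal

theorem exists_sub_algebraMap_mem_of_inertiaDeg'_eq_one {R S : Type*} [CommRing R]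
    [CommRing S] [Algebra R S] {p : Ideal R} [p.IsMaximal] {P : Ideal S}
    (h : inertiaDeg' p P = 1) (t : S) : ∃ r : R, t - algebraMap R S r ∈ P := by
  unfold inertiaDeg' at h
  split_ifs at h with hPp
  let _ : Algebra (R ⧸ p) (S ⧸ P) := Quotient.algebraQuotientOfLEComap hPp.ge
  let _ : Field (R ⧸ p) := Quotient.field p
  obtain ⟨q, hq⟩ := (Algebra.finrank_eq_one_iff_bijective_algebraMap.mp h).2 (Quotient.mk P t)
  obtain ⟨r, rfl⟩ := Quotient.mk_surjective q
  exact ⟨r, Quotient.eq.mp hq.symm⟩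

variable {S : Type*} [CommRing S] {P : Ideal S}

theorem intCast_notMem_pow_two_of_ramificationIdx'_eq_one {n : ℤ} (hn : (n : S) ∈ P)
    (he : ramificationIdx' (span {n}) P = 1) : (n : S) ∉ P ^ 2 := by
  have hmap : map (algebraMap ℤ S) (span {n}) = span {(n : S)} := by simp [map_span]
  rw [← span_singleton_le_iff_mem, ← hmap,
    ← ramificationIdx'_ne_one_iff (by rwa [hmap, span_singleton_le_iff_mem])]
  exact not_not.mpr he

theorem mem_or_sub_one_mem_of_inertiaDeg'_eq_one (h2 : (2 : S) ∈ P)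
    (hf : inertiaDeg' (span {(2 : ℤ)}) P = 1) (t : S) : t ∈ P ∨ t - 1 ∈ P := by
  have : (span {(2 : ℤ)}).IsMaximal := by exact_mod_cast Int.ideal_span_isMaximal_of_prime 2
  obtain ⟨n, hn⟩ := exists_sub_algebraMap_mem_of_inertiaDeg'_eq_one hf t
  rw [algebraMap_int_eq, eq_intCast] at hn
  rcases Int.even_or_odd' n with ⟨m, rfl | rfl⟩
  · left
    simpa using P.add_mem hn (P.mul_mem_right (m : S) h2)
  · right
    have e : t - 1 = t - ↑(2 * m + 1) + 2 * m := by push_cast; ring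
    rw [e]
    exact P.add_mem hn (P.mul_mem_right (m : S) h2)

theorem sq_sub_one_mem_pow_two (h2 : (2 : S) ∈ P) {t : S} (ht : t - 1 ∈ P) :
    t ^ 2 - 1 ∈ P ^ 2 := by
  have e : t ^ 2 - 1 = (t - 1) * (t - 1 + 2) := by ring
  rw [e, pow_two]
  exact mul_mem_mul ht (P.add_mem ht h2)

variable (hP : P ≠ ⊤) {x : S} (hx : x ∈ P)
include hP hx

theorem sq_add_sq_sub_mul_sub_three_notMem_of_sub_one_mem {y z : S} (hy : y - 1 ∈ P)
    (hz : z - 1 ∈ P) : y ^ 2 + z ^ 2 - x * y * z - 3 ∉ P := by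
  intro h
  have e : (1 : S) =
      (y - 1) * (y + 1) + (z - 1) * (z + 1) - x * y * z - (y ^ 2 + z ^ 2 - x * y * z - 3) := by
    ring
  refine hP ((eq_top_iff_one P).mpr ?_)
  rw [e]
  exact P.sub_mem (P.sub_mem (P.add_mem (P.mul_mem_right _ hy) (P.mul_mem_right _ hz))
    (P.mul_mem_right _ (P.mul_mem_right _ hx))) h

theorem sq_add_sq_sub_mul_sub_three_notMem_of_mem (h2 : (2 : S) ∈ P) (h2' : (2 : S) ∉ P ^ 2)
    {y z : S} (hy : y ∈ P) (hz : z ∈ P ∨ z - 1 ∈ P) :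
    y ^ 2 + z ^ 2 - x * y * z - 3 ∉ P ^ 2 := by
  intro h
  have hxyz : x * y * z ∈ P ^ 2 := by
    rw [pow_two]; exact mul_mem_right _ _ (mul_mem_mul hx hy)
  have hy2 : y ^ 2 ∈ P ^ 2 := pow_mem_pow hy 2
  rcases hz with hz | hz
  · have h3 : (3 : S) ∈ P ^ 2 := by
      have e : (3 : S) = y ^ 2 + z ^ 2 - x * y * z - (y ^ 2 + z ^ 2 - x * y * z - 3) := by ring
      rw [e]
      exact sub_mem (sub_mem (add_mem hy2 (pow_mem_pow hz 2)) hxyz) h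
    refine hP ((eq_top_iff_one P).mpr ?_)
    have e : (1 : S) = 3 - 2 := by norm_num
    rw [e]
    exact P.sub_mem (pow_le_self two_ne_zero h3) h2
  · have e : (2 : S) = y ^ 2 + (z ^ 2 - 1) - x * y * z - (y ^ 2 + z ^ 2 - x * y * z - 3) := by
      ring
    rw [e] at h2'
    exact h2' (sub_mem (sub_mem (add_mem hy2 (sq_sub_one_mem_pow_two h2 hz)) hxyz) h)

theorem sq_add_sq_sub_mul_sub_three_notMem (h2 : (2 : S) ∈ P) (h2' : (2 : S) ∉ P ^ 2)
    (hres : ∀ t : S, t ∈ P ∨ t - 1 ∈ P) (y z : S) :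
    y ^ 2 + z ^ 2 - x * y * z - 3 ∉ P ^ 2 := by
  rcases hres y with hy | hy
  · exact sq_add_sq_sub_mul_sub_three_notMem_of_mem hP hx h2 h2' hy (hres z)
  rcases hres z with hz | hz
  · rw [show y ^ 2 + z ^ 2 - x * y * z - 3 = z ^ 2 + y ^ 2 - x * z * y - 3 by ring]
    exact sq_add_sq_sub_mul_sub_three_notMem_of_mem hP hx h2 h2' hz (.inr hy)
  · exact fun h ↦ sq_add_sq_sub_mul_sub_three_notMem_of_sub_one_mem hP hx hy hz
      (pow_le_self two_ne_zero h)

end Ideal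

theorem stmt_0_general (K : Type*) [Field K] [NumberField K]
    (hprime : ∃ P : Ideal (𝓞 K), P.IsPrime ∧ (2 : 𝓞 K) ∈ P ∧
      Ideal.ramificationIdx' (Ideal.span {(2 : ℤ)}) P = 1 ∧
      Ideal.inertiaDeg' (Ideal.span {(2 : ℤ)}) P = 1)
    (a b : 𝓞 K)
    (r d : ℕ) (hrodd : Odd r) (hd : 2 ≤ d)
    (c : 𝓞 K) (hc : c = 2 ^ d * b - 3 ^ r) :
    ¬ ∃ x y z : 𝓞 K, 2 ∣ x ∧ a * x ^ d - y ^ 2 - z ^ 2 + x * y * z - c = 0 := by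
  rintro ⟨x, y, z, h2x, heq⟩
  obtain ⟨P, hP, h2, he, hf⟩ := hprime
  have h2' : (2 : 𝓞 K) ∉ P ^ 2 := by
    exact_mod_cast Ideal.intCast_notMem_pow_two_of_ramificationIdx'_eq_one (n := 2)
      (by exact_mod_cast h2) he
  have hx : x ∈ P := P.mem_of_dvd h2x h2
  have hpow {w : 𝓞 K} (hw : w ∈ P) : w ^ d ∈ P ^ 2 :=
    Ideal.pow_le_pow_right hd (Ideal.pow_mem_pow hw d)
  have h3 : (3 : 𝓞 K) ^ r - 3 ∈ P ^ 2 :=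
    (P ^ 2).mem_of_dvd (four_dvd_three_pow_sub_three hrodd)
      (by convert Ideal.pow_mem_pow h2 2; norm_num)
  refine Ideal.sq_add_sq_sub_mul_sub_three_notMem hP.ne_top hx h2 h2'
    (Ideal.mem_or_sub_one_mem_of_inertiaDeg'_eq_one h2 hf) y z ?_
  have e : y ^ 2 + z ^ 2 - x * y * z - 3 = a * x ^ d - 2 ^ d * b + (3 ^ r - 3)
      - (a * x ^ d - y ^ 2 - z ^ 2 + x * y * z - c) := by
    rw [hc]; ring
  rw [e, heq, sub_zero]
  exact add_mem
    (sub_mem ((P ^ 2).mul_mem_left a (hpow hx)) ((P ^ 2).mul_mem_right b (hpow h2))) h3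

/-- If `K` is a number field admitting a prime ideal `𝔓` above `2` with
`e(𝔓|2) = f(𝔓|2) = 1`, `a, b ∈ 𝓞 K \ {0}`, `r` odd, `d ≥ 2`, and `c = 2^d b - 3^r`, then
`a x^d - y² - z² + xyz - c = 0` has no solution in `𝓞 K` with `2 ∣ x`. -/
theorem stmt_0 (K : Type*) [Field K] [NumberField K]
    (hprime : ∃ P : Ideal (𝓞 K), P.IsPrime ∧ (2 : 𝓞 K) ∈ P ∧
      Ideal.ramificationIdx' (Ideal.span {(2 : ℤ)}) P = 1 ∧
      Ideal.inertiaDeg' (Ideal.span {(2 : ℤ)}) P = 1)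
    (a b : 𝓞 K) (ha : a ≠ 0) (hb : b ≠ 0)
    (r d : ℕ) (hr : 0 < r) (hrodd : Odd r) (hd : 2 ≤ d)
    (c : 𝓞 K) (hc : c = 2 ^ d * b - 3 ^ r) :
    ¬ ∃ x y z : 𝓞 K, 2 ∣ x ∧ a * x ^ d - y ^ 2 - z ^ 2 + x * y * z - c = 0 :=
  stmt_0_general K hprime a b r d hrodd hd c hc
end

section
/- Let K be a number field such that there exists a prime ideal 𝔓 of the ring of integers O_K lying above 2 with ramification index e(𝔓|2) = 1 and inertia degree f(𝔓|2) = 1. Let α ∈ O_K be an element that is not a root of the polynomial x⁸ + 5x⁶ − 432x⁴ − 5184x² − 15552, and let E_α be the curve over K given by the Weierstrass equation y² − α·x·y = x³ − (α² + 5). Then E_α has no integral point: there is no pair (x₀, y₀) ∈ O_K² with 2 ∣ x₀ in O_K such that y₀² − α·x₀·y₀ = x₀³ − (α² + 5). -/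
/-! The prime 𝔓 is unramified of degree one over 2, so `𝓞 K ⧸ 𝔓 ^ 2 ≃+* ZMod 4`. Reducing the
equation modulo 𝔓 ^ 2 with `x = 2u` gives `y² + α² + 1 ≡ 2αuy (mod 4)`. Modulo 2 this forces
`y + α` to be odd, so the left side is `2` while the right side is `0`. -/

open NumberField

namespace Ideal

theorem algebraMap_notMem_sq_of_ramificationIdx'_eq_one {R S : Type*} [CommRing R] [CommRing S]
    [Algebra R S] {p : R} {P : Ideal S} (hpP : algebraMap R S p ∈ P)
    (he : ramificationIdx' (span {p}) P = 1) : algebraMap R S p ∉ P ^ 2 := by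
  have hmap : map (algebraMap R S) (span {p}) = span {algebraMap R S p} := by
    rw [map_span, Set.image_singleton]
  rw [← span_singleton_le_iff_mem, ← hmap]
  rwa [← ramificationIdx'_ne_one_iff (by rwa [hmap, span_singleton_le_iff_mem]), not_not]

theorem charP_quotient_sq {R : Type*} [CommRing R] {p : ℕ} {P : Ideal R} (hp : p.Prime)
    (hpP : (p : R) ∈ P) (hpP2 : (p : R) ∉ P ^ 2) : CharP (R ⧸ P ^ 2) (p ^ 2) := by
  have hcast (n : ℕ) : (n : R ⧸ P ^ 2) = 0 ↔ (n : R) ∈ P ^ 2 := by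
    rw [← map_natCast (Quotient.mk (P ^ 2)), Quotient.eq_zero_iff_mem]
  have hsq : ((p ^ 2 : ℕ) : R ⧸ P ^ 2) = 0 := by
    rw [hcast, Nat.cast_pow]
    exact pow_mem_pow hpP 2
  obtain ⟨k, hk, hchar⟩ := (Nat.dvd_prime_pow hp).mp (ringChar.dvd hsq)
  apply ringChar.of_eq
  interval_cases k
  · have : Nontrivial (R ⧸ P ^ 2) :=
      Quotient.nontrivial_iff.mpr fun h ↦ hpP2 (h ▸ Submodule.mem_top)
    exact absurd hchar CharP.ringChar_ne_one
  · exact absurd ((hcast p).mp ((ringChar.spec _ p).mpr (by rw [hchar, pow_one]))) hpP2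
  · exact hchar

variable {R : Type*} [CommRing R] [IsDedekindDomain R] [Module.Free ℤ R] [Module.Finite ℤ R]
  {p : ℕ} {P : Ideal R} [P.LiesOver (span {(p : ℤ)})]

theorem natCard_quotient_sq_of_inertiaDeg'_eq_one (hp : p.Prime)
    (hf : inertiaDeg' (span {(p : ℤ)}) P = 1) : Nat.card (R ⧸ P ^ 2) = p ^ 2 := by
  rw [← Submodule.cardQuot_apply, ← absNorm_apply, map_pow, absNorm_eq_pow_inertiaDeg' P hp, hf,
    pow_one]

noncomputable def quotientSqEquivZMod (hp : p.Prime) (hpP : (p : R) ∈ P)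
    (he : ramificationIdx' (span {(p : ℤ)}) P = 1) (hf : inertiaDeg' (span {(p : ℤ)}) P = 1) :
    R ⧸ P ^ 2 ≃+* ZMod (p ^ 2) :=
  have hpP2 : (p : R) ∉ P ^ 2 := by
    simpa using algebraMap_notMem_sq_of_ramificationIdx'_eq_one (by simpa using hpP) he
  have hcard := natCard_quotient_sq_of_inertiaDeg'_eq_one hp hf
  have : Finite (R ⧸ P ^ 2) := Nat.finite_of_card_ne_zero (by simp [hcard, hp.ne_zero])
  have := Fintype.ofFinite (R ⧸ P ^ 2)
  have := charP_quotient_sq hp hpP hpP2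
  (ZMod.ringEquiv _ (by rw [← Nat.card_eq_fintype_card, hcard])).symm

end Ideal

theorem zmod_four_no_solution :
    ∀ a u y : ZMod 4, y ^ 2 - a * (2 * u) * y ≠ (2 * u) ^ 3 - (a ^ 2 + 5) := by
  decide

theorem stmt_12_general (K : Type*) [Field K] [NumberField K]
    (hprime : ∃ P : Ideal (𝓞 K), P.IsPrime ∧ (2 : 𝓞 K) ∈ P ∧
      Ideal.ramificationIdx' (Ideal.span {(2 : ℤ)}) P = 1 ∧
      Ideal.inertiaDeg' (Ideal.span {(2 : ℤ)}) P = 1)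
    (α : 𝓞 K) :
    ¬ ∃ x y : 𝓞 K, 2 ∣ x ∧ y ^ 2 - α * x * y = x ^ 3 - (α ^ 2 + 5) := by
  obtain ⟨P, hP, h2P, he, hf⟩ := hprime
  rintro ⟨_, y, ⟨u, rfl⟩, hxy⟩
  have : P.LiesOver (Ideal.span {((2 : ℕ) : ℤ)}) :=
    (Ideal.liesOver_span_iff hP.ne_top Int.prime_two).mpr (by simpa using h2P)
  let φ : 𝓞 K →+* ZMod 4 :=
    (Ideal.quotientSqEquivZMod (p := 2) Nat.prime_two (by simpa using h2P) he hf).toRingHom.comp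
      (Ideal.Quotient.mk (P ^ 2))
  apply zmod_four_no_solution (φ α) (φ u) (φ y)
  simpa only [map_sub, map_mul, map_pow, map_add, map_ofNat] using congrArg φ hxy

/-- If `K` is a number field admitting a prime ideal above `2` with
`e = f = 1` and `α ∈ 𝓞 K` is not a root of `x⁸ + 5x⁶ - 432x⁴ - 5184x² - 15552`, then the
curve `E_α : y² - αxy = x³ - (α² + 5)` has no integral point `(x₀, y₀) ∈ 𝓞 K²` with
`2 ∣ x₀`. -/
theorem stmt_12 (K : Type*) [Field K] [NumberField K]
    (hprime : ∃ P : Ideal (𝓞 K), P.IsPrime ∧ (2 : 𝓞 K) ∈ P ∧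
      Ideal.ramificationIdx' (Ideal.span {(2 : ℤ)}) P = 1 ∧
      Ideal.inertiaDeg' (Ideal.span {(2 : ℤ)}) P = 1)
    (α : 𝓞 K)
    (hα : α ^ 8 + 5 * α ^ 6 - 432 * α ^ 4 - 5184 * α ^ 2 - 15552 ≠ 0) :
    ¬ ∃ x y : 𝓞 K, 2 ∣ x ∧ y ^ 2 - α * x * y = x ^ 3 - (α ^ 2 + 5) :=
  stmt_12_general K hprime α
end
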